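/- If a probability distribution pr on {0,1,…,m}^n satisfies, for every string x ∈ {0,1,…,m}^n, the inequality ∑_{y ⪯ x} (−1)^{|y|−|x|} · pr[{z ⪯ y}] / D_y[{z ⪯ y}] ≥ 0, then pr lies in the convex hull of the (m+1)^n product distributions {D_w : w ∈ {0,1,…,m}^n}. -/
import Mathlib


open Finset

/-- The weight `|w|` of a string: the number of nonzero coordinates. -/
def strWt {m n : ℕ} (w : Fin n → Fin (m + 1)) : ℕ :=
  (Finset.univ.filter fun j => w j ≠ 0).card

/-- The product distribution `D_w` associated to a string `w`: coordinates are
independent, coordinate `j` equals `w j` with probability `q j (w j)` and `0`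
with probability `1 - q j (w j)` when `w j ≠ 0`, and equals `0` surely when `w j = 0`. -/
noncomputable def prodDist {m n : ℕ} (q : Fin n → Fin (m + 1) → ℝ)
    (w : Fin n → Fin (m + 1)) : (Fin n → Fin (m + 1)) → ℝ := fun z =>
  ∏ j, if w j = 0 then (if z j = 0 then (1 : ℝ) else 0)
    else if z j = w j then q j (w j) else if z j = 0 then 1 - q j (w j) else 0

/-- `cumul p y = p[{z ⪯ y}] = ∑_{z ⪯ y} p z`, where `z ⪯ y` iff every coordinate of `y`
is `0` or agrees with `z`. -/
noncomputable def cumul {m n : ℕ} (p : (Fin n → Fin (m + 1)) → ℝ)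
    (y : Fin n → Fin (m + 1)) : ℝ :=
  ∑ z ∈ Finset.univ.filter (fun z => ∀ j, y j = 0 ∨ y j = z j), p z

namespace GML

variable {m n : ℕ}

/-- `Ext a b` : `b` extends `a`. -/
def Ext (a b : Fin n → Fin (m + 1)) : Prop := ∀ j, a j = 0 ∨ a j = b j

instance (a b : Fin n → Fin (m + 1)) : Decidable (Ext a b) :=
  inferInstanceAs (Decidable (∀ j, a j = 0 ∨ a j = b j))

def supp (a : Fin n → Fin (m + 1)) : Finset (Fin n) := univ.filter fun j => a j ≠ 0

lemma mem_supp {a : Fin n → Fin (m + 1)} {j : Fin n} : j ∈ supp a ↔ a j ≠ 0 := by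
  simp [supp]

lemma strWt_eq_card (a : Fin n → Fin (m + 1)) : strWt a = (supp a).card := rfl

lemma ext_refl (a : Fin n → Fin (m + 1)) : Ext a a := fun _ => Or.inr rfl

lemma Ext.trans {a b c : Fin n → Fin (m + 1)} (h1 : Ext a b) (h2 : Ext b c) : Ext a c := by
  intro j
  rcases h1 j with h | h
  · exact Or.inl h
  · rcases h2 j with h' | h'
    · exact Or.inl (h.trans h')
    · exact Or.inr (h.trans h')

lemma Ext.app {a b : Fin n → Fin (m + 1)} (h : Ext a b) {j} (hj : a j ≠ 0) : b j = a j :=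
  ((h j).resolve_left hj).symm

lemma Ext.supp_subset {a b : Fin n → Fin (m + 1)} (h : Ext a b) : supp a ⊆ supp b := by
  intro j hj
  rw [mem_supp] at *
  rw [h.app hj]; exact hj

lemma ext_antisymm {a b : Fin n → Fin (m + 1)} (h : Ext a b) (hs : supp b ⊆ supp a) : a = b := by
  funext j
  rcases h j with h' | h'
  · by_contra hne
    have hb : b j ≠ 0 := fun hb => hne (by rw [h', hb])
    have : a j ≠ 0 := mem_supp.mp (hs (mem_supp.mpr hb))
    exact this h'
  · exact h'

def restr (b : Fin n → Fin (m + 1)) (S : Finset (Fin n)) : Fin n → Fin (m + 1) :=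
  fun j => if j ∈ S then b j else 0

lemma supp_restr {b : Fin n → Fin (m + 1)} {S} (hS : S ⊆ supp b) : supp (restr b S) = S := by
  ext j
  by_cases hj : j ∈ S
  · simp [mem_supp, restr, hj, mem_supp.mp (hS hj)]
  · simp [mem_supp, restr, hj]

lemma restr_supp {y b : Fin n → Fin (m + 1)} (h : Ext y b) : restr b (supp y) = y := by
  funext j
  by_cases hj : y j = 0
  · simp [restr, mem_supp, hj]
  · simp [restr, mem_supp, hj, h.app hj]

lemma ext_restr_right (b : Fin n → Fin (m + 1)) (S) : Ext (restr b S) b := by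
  intro j
  unfold restr
  split
  · exact Or.inr rfl
  · exact Or.inl rfl

lemma ext_restr_left {a b : Fin n → Fin (m + 1)} (h : Ext a b) {S} (hS : supp a ⊆ S) :
    Ext a (restr b S) := by
  intro j
  by_cases hj : a j = 0
  · exact Or.inl hj
  · right
    have hjS : j ∈ S := hS (mem_supp.mpr hj)
    simp only [restr, if_pos hjS]
    exact (h.app hj).symm

lemma sum_pow_powerset (D : Finset (Fin n)) :
    ∑ T ∈ D.powerset, (-1 : ℝ) ^ T.card = if D = ∅ then 1 else 0 := by
  have h1 : ∑ T ∈ D.powerset, (-1 : ℝ) ^ T.card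
      = ((∑ T ∈ D.powerset, (-1 : ℤ) ^ T.card : ℤ) : ℝ) := by
    push_cast
    rfl
  rw [h1, Finset.sum_powerset_neg_one_pow_card]
  split <;> simp

/-- First interval Möbius sum. -/
lemma sum_interval_pow (a b : Fin n → Fin (m + 1)) :
    ∑ y ∈ univ.filter (fun y => Ext a y ∧ Ext y b), (-1 : ℝ) ^ (strWt y - strWt a)
      = if a = b then 1 else 0 := by
  by_cases hab : Ext a b
  · rw [Finset.sum_nbij' (i := fun y => supp y \ supp a)
      (j := fun T => restr b (supp a ∪ T))
      (t := (supp b \ supp a).powerset)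
      (g := fun T => (-1 : ℝ) ^ T.card)]
    · rw [sum_pow_powerset]
      have hiff : (supp b \ supp a = ∅) ↔ (a = b) := by
        rw [Finset.sdiff_eq_empty_iff_subset]
        exact ⟨fun h => ext_antisymm hab h, fun h => h ▸ subset_rfl⟩
      rw [if_congr hiff rfl rfl]
    · intro y hy
      simp only [mem_filter, mem_univ, true_and] at hy
      exact Finset.mem_powerset.mpr (Finset.sdiff_subset_sdiff hy.2.supp_subset le_rfl)
    · intro T hT
      rw [Finset.mem_powerset] at hT
      have hTb : T ⊆ supp b := hT.trans Finset.sdiff_subset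
      have hS : supp a ∪ T ⊆ supp b := Finset.union_subset hab.supp_subset hTb
      simp only [mem_filter, mem_univ, true_and]
      exact ⟨ext_restr_left hab Finset.subset_union_left, ext_restr_right _ _⟩
    · intro y hy
      simp only [mem_filter, mem_univ, true_and] at hy
      have h1 : supp a ∪ (supp y \ supp a) = supp y :=
        Finset.union_sdiff_of_subset hy.1.supp_subset
      rw [h1, restr_supp hy.2]
    · intro T hT
      rw [Finset.mem_powerset] at hT
      have hTb : T ⊆ supp b := hT.trans Finset.sdiff_subset
      have hS : supp a ∪ T ⊆ supp b := Finset.union_subset hab.supp_subset hTb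
      have hdisj : Disjoint (supp a) T := by
        rw [Finset.disjoint_left]
        intro j hja hjT
        exact (Finset.mem_sdiff.mp (hT hjT)).2 hja
      rw [supp_restr hS, Finset.union_sdiff_cancel_left hdisj]
    · intro y hy
      simp only [mem_filter, mem_univ, true_and] at hy
      rw [strWt_eq_card, strWt_eq_card, Finset.card_sdiff_of_subset hy.1.supp_subset]
  · rw [Finset.filter_false_of_mem, Finset.sum_empty]
    · rw [if_neg]
      intro h
      exact hab (h ▸ ext_refl a)
    · intro y _
      rintro ⟨h1, h2⟩
      exact hab (h1.trans h2)

/-- Second interval Möbius sum (complementary exponent). -/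
lemma sum_interval_pow' (a b : Fin n → Fin (m + 1)) :
    ∑ y ∈ univ.filter (fun y => Ext a y ∧ Ext y b), (-1 : ℝ) ^ (strWt b - strWt y)
      = if a = b then 1 else 0 := by
  by_cases hab : Ext a b
  · rw [Finset.sum_nbij' (i := fun y => supp b \ supp y)
      (j := fun T => restr b (supp b \ T))
      (t := (supp b \ supp a).powerset)
      (g := fun T => (-1 : ℝ) ^ T.card)]
    · rw [sum_pow_powerset]
      have hiff : (supp b \ supp a = ∅) ↔ (a = b) := by
        rw [Finset.sdiff_eq_empty_iff_subset]
        exact ⟨fun h => ext_antisymm hab h, fun h => h ▸ subset_rfl⟩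
      rw [if_congr hiff rfl rfl]
    · intro y hy
      simp only [mem_filter, mem_univ, true_and] at hy
      exact Finset.mem_powerset.mpr (Finset.sdiff_subset_sdiff le_rfl hy.1.supp_subset)
    · intro T hT
      rw [Finset.mem_powerset] at hT
      have haS : supp a ⊆ supp b \ T := by
        intro j hj
        rw [Finset.mem_sdiff]
        refine ⟨hab.supp_subset hj, fun hjT => ?_⟩
        exact (Finset.mem_sdiff.mp (hT hjT)).2 hj
      simp only [mem_filter, mem_univ, true_and]
      exact ⟨ext_restr_left hab haS, ext_restr_right _ _⟩
    · intro y hy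
      simp only [mem_filter, mem_univ, true_and] at hy
      rw [Finset.sdiff_sdiff_eq_self hy.2.supp_subset, restr_supp hy.2]
    · intro T hT
      rw [Finset.mem_powerset] at hT
      have hTb : T ⊆ supp b := hT.trans Finset.sdiff_subset
      rw [supp_restr Finset.sdiff_subset, Finset.sdiff_sdiff_eq_self hTb]
    · intro y hy
      simp only [mem_filter, mem_univ, true_and] at hy
      rw [strWt_eq_card, strWt_eq_card, Finset.card_sdiff_of_subset hy.2.supp_subset]
  · rw [Finset.filter_false_of_mem, Finset.sum_empty]
    · rw [if_neg]
      intro h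
      exact hab (h ▸ ext_refl a)
    · intro y _
      rintro ⟨h1, h2⟩
      exact hab (h1.trans h2)

/-- Total mass of each string in the product distribution. -/
noncomputable def Q (q : Fin n → Fin (m + 1) → ℝ) (y : Fin n → Fin (m + 1)) : ℝ :=
  ∏ j, if y j = 0 then 1 else q j (y j)

lemma Q_pos (q : Fin n → Fin (m + 1) → ℝ)
    (hq : ∀ (j : Fin n) (i : Fin (m + 1)), i ≠ 0 → 0 < q j i ∧ q j i ≤ 1)
    (y : Fin n → Fin (m + 1)) : 0 < Q q y := by
  apply Finset.prod_pos
  intro j _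
  by_cases hj : y j = 0
  · simp [hj]
  · simp only [if_neg hj]
    exact (hq j (y j) hj).1

/-- Cumulative distribution function of `prodDist q x` at `y`. -/
lemma cumul_prodDist (q : Fin n → Fin (m + 1) → ℝ) (x y : Fin n → Fin (m + 1)) :
    cumul (prodDist q x) y = if Ext y x then Q q y else 0 := by
  classical
  set t : Fin n → Finset (Fin (m + 1)) := fun j => if y j = 0 then univ else {y j} with ht
  have hset : (univ.filter (fun z => ∀ j, y j = 0 ∨ y j = z j) : Finset (Fin n → Fin (m + 1)))
      = Fintype.piFinset t := by
    ext z
    simp only [mem_filter, mem_univ, true_and, Fintype.mem_piFinset, ht]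
    apply forall_congr'
    intro j
    by_cases h : y j = 0 <;> simp [h, eq_comm]
  rw [cumul, hset]
  unfold prodDist
  have hps := Finset.prod_univ_sum t (fun j v => if x j = 0 then (if v = 0 then (1 : ℝ) else 0)
      else if v = x j then q j (x j) else if v = 0 then 1 - q j (x j) else 0)
  rw [← hps]
  have hfac : ∀ j, (∑ v ∈ t j, if x j = 0 then (if v = 0 then (1 : ℝ) else 0)
      else if v = x j then q j (x j) else if v = 0 then 1 - q j (x j) else 0)
      = if (y j = 0 ∨ y j = x j) then (if y j = 0 then 1 else q j (y j)) else 0 := by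
    intro j
    by_cases hy : y j = 0
    · simp only [ht, if_pos hy, hy, true_or, if_pos]
      by_cases hx : x j = 0
      · simp [hx]
      · simp only [if_neg hx]
        have hd : ∀ v : Fin (m + 1),
            (if v = x j then q j (x j) else if v = 0 then 1 - q j (x j) else (0:ℝ))
            = (if v = x j then q j (x j) else 0) + (if v = 0 then 1 - q j (x j) else 0) := by
          intro v
          by_cases h1 : v = x j
          · simp [h1, hx]
          · by_cases h2 : v = 0 <;> simp [h1, h2, Ne.symm hx]
        rw [Finset.sum_congr rfl fun v _ => hd v, Finset.sum_add_distrib]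
        simp [Finset.sum_ite_eq']
    · simp only [ht, if_neg hy, Finset.sum_singleton]
      by_cases hx : x j = 0
      · have : ¬ (y j = 0 ∨ y j = x j) := by
          rintro (h | h)
          · exact hy h
          · exact hy (h.trans hx)
        simp [hx, hy, this]
      · simp only [if_neg hx]
        by_cases hyx : y j = x j
        · simp [hyx, hy, hx]
        · have : ¬ (y j = 0 ∨ y j = x j) := by
            rintro (h | h)
            · exact hy h
            · exact hyx h
          simp [hyx, hy, this]
  rw [Finset.prod_congr rfl fun j _ => hfac j]
  by_cases hE : Ext y x
  · rw [if_pos hE, Q]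
    apply Finset.prod_congr rfl
    intro j _
    rw [if_pos (hE j)]
  · rw [if_neg hE]
    rw [Ext] at hE
    push_neg at hE
    obtain ⟨j, hj⟩ := hE
    apply Finset.prod_eq_zero (Finset.mem_univ j)
    have hnot : ¬(y j = 0 ∨ y j = x j) := by push_neg; exact hj
    rw [if_neg hnot]

/-- Inversion: a function is determined by its `cumul`. -/
lemma inversion (p : (Fin n → Fin (m + 1)) → ℝ) (w : Fin n → Fin (m + 1)) :
    p w = ∑ y ∈ univ.filter (fun y => Ext w y),
      (-1 : ℝ) ^ (strWt y - strWt w) * cumul p y := by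
  have step1 : ∑ y ∈ univ.filter (fun y => Ext w y),
      (-1 : ℝ) ^ (strWt y - strWt w) * cumul p y
      = ∑ y ∈ univ.filter (fun y => Ext w y),
        ∑ z ∈ univ.filter (fun z => Ext y z),
          (-1 : ℝ) ^ (strWt y - strWt w) * p z := by
    apply Finset.sum_congr rfl
    intro y _
    rw [cumul, Finset.mul_sum]
    rfl
  rw [step1]
  rw [Finset.sum_comm' (t' := univ)
    (s' := fun z => univ.filter (fun y => Ext w y ∧ Ext y z))
    (by intro y z; simp only [mem_filter, mem_univ, true_and, and_true]; try tauto)]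
  have step2 : ∀ z, ∑ y ∈ univ.filter (fun y => Ext w y ∧ Ext y z),
      (-1 : ℝ) ^ (strWt y - strWt w) * p z
      = (if w = z then 1 else 0) * p z := by
    intro z
    rw [← Finset.sum_mul, sum_interval_pow]
  rw [Finset.sum_congr rfl fun z _ => step2 z]
  simp [Finset.sum_ite_eq]

/-- Möbius inversion the other way. -/
lemma mobius_inv (F : (Fin n → Fin (m + 1)) → ℝ) (y : Fin n → Fin (m + 1)) :
    ∑ x ∈ univ.filter (fun x => Ext y x),
      (∑ u ∈ univ.filter (fun u => Ext x u), (-1 : ℝ) ^ (strWt u - strWt x) * F u) = F y := by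
  rw [Finset.sum_comm' (t' := univ)
    (s' := fun u => univ.filter (fun x => Ext y x ∧ Ext x u))
    (by intro x u; simp only [mem_filter, mem_univ, true_and, and_true]; try tauto)]
  have step2 : ∀ u, ∑ x ∈ univ.filter (fun x => Ext y x ∧ Ext x u),
      (-1 : ℝ) ^ (strWt u - strWt x) * F u
      = (if y = u then 1 else 0) * F u := by
    intro u
    rw [← Finset.sum_mul, sum_interval_pow']
  rw [Finset.sum_congr rfl fun u _ => step2 u]
  simp [Finset.sum_ite_eq]

end GML

open GML in
/-- Generalized Mixing Lemma (sufficiency direction): if a probability distribution `pr`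
on `{0,1,…,m}ⁿ` satisfies `∑_{y ⪯ x} (−1)^{|y|−|x|} pr[{z ⪯ y}] / D_y[{z ⪯ y}] ≥ 0` for
every string `x`, then `pr` lies in the convex hull of the product distributions `D_w`. -/
theorem generalized_mixing_lemma_mpr (m n : ℕ) (hm : 1 ≤ m) (hn : 1 ≤ n)
    (q : Fin n → Fin (m + 1) → ℝ)
    (hq : ∀ (j : Fin n) (i : Fin (m + 1)), i ≠ 0 → 0 < q j i ∧ q j i ≤ 1)
    (pr : (Fin n → Fin (m + 1)) → ℝ)
    (hpr0 : ∀ z, 0 ≤ pr z) (hpr1 : ∑ z, pr z = 1)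
    (hineq : ∀ x : Fin n → Fin (m + 1),
      0 ≤ ∑ y ∈ Finset.univ.filter (fun y => ∀ j, x j = 0 ∨ x j = y j),
        (-1 : ℝ) ^ (strWt y - strWt x) * cumul pr y / cumul (prodDist q y) y) :
    pr ∈ convexHull ℝ (Set.range (prodDist q)) := by
  classical
  set c : (Fin n → Fin (m + 1)) → ℝ := fun x =>
    ∑ y ∈ univ.filter (fun y => Ext x y),
      (-1 : ℝ) ^ (strWt y - strWt x) * (cumul pr y / Q q y) with hc
  have hQpos : ∀ y, 0 < Q q y := Q_pos q hq
  have hcum_self : ∀ y, cumul (prodDist q y) y = Q q y := by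
    intro y
    rw [cumul_prodDist, if_pos (ext_refl y)]
  -- nonnegativity of coefficients
  have hc0 : ∀ x, 0 ≤ c x := by
    intro x
    have h := hineq x
    have heq : c x = ∑ y ∈ Finset.univ.filter (fun y => ∀ j, x j = 0 ∨ x j = y j),
        (-1 : ℝ) ^ (strWt y - strWt x) * cumul pr y / cumul (prodDist q y) y := by
      rw [hc]
      apply Finset.sum_congr
      · apply Finset.filter_congr
        intro y _
        exact Iff.rfl
      · intro y _
        rw [hcum_self, mul_div_assoc]
    rw [heq]
    exact h
  -- partial sums of coefficients
  have hsum_c : ∀ y, ∑ x ∈ univ.filter (fun x => Ext y x), c x = cumul pr y / Q q y := by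
    intro y
    exact mobius_inv (fun u => cumul pr u / Q q u) y
  -- total mass 1
  have hc1 : ∑ x, c x = 1 := by
    have h0 := hsum_c (fun _ => 0)
    have hfilter : (univ.filter (fun x => Ext (fun _ => (0 : Fin (m + 1))) x))
        = (univ : Finset (Fin n → Fin (m + 1))) := by
      apply Finset.filter_true_of_mem
      intro x _
      intro j
      exact Or.inl rfl
    rw [hfilter] at h0
    have hcum0 : cumul pr (fun _ => (0 : Fin (m + 1))) = 1 := by
      rw [cumul]
      rw [Finset.filter_true_of_mem (fun z _ => fun j => Or.inl rfl)]
      exact hpr1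
    have hQ0 : Q q (fun _ => (0 : Fin (m + 1))) = 1 := by
      simp [Q]
    rw [hcum0, hQ0] at h0
    simpa using h0
  -- representation of pr as a convex combination
  have hrepr : pr = ∑ x, c x • prodDist q x := by
    funext w
    rw [Finset.sum_apply]
    have hterm : ∀ x : Fin n → Fin (m + 1), (c x • prodDist q x) w
        = ∑ y ∈ univ.filter (fun y => Ext w y),
          (-1 : ℝ) ^ (strWt y - strWt w) * (c x * (if Ext y x then Q q y else 0)) := by
      intro x
      have : (c x • prodDist q x) w = c x * prodDist q x w := rfl
      rw [this, inversion (prodDist q x) w, Finset.mul_sum]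
      apply Finset.sum_congr rfl
      intro y _
      rw [cumul_prodDist]
      ring
    rw [Finset.sum_congr rfl fun x _ => hterm x]
    rw [Finset.sum_comm]
    have hinner : ∀ y, Ext w y → ∑ x : Fin n → Fin (m + 1),
        (-1 : ℝ) ^ (strWt y - strWt w) * (c x * (if Ext y x then Q q y else 0))
        = (-1 : ℝ) ^ (strWt y - strWt w) * cumul pr y := by
      intro y _
      rw [← Finset.mul_sum]
      congr 1
      have h1 : ∑ x : Fin n → Fin (m + 1), c x * (if Ext y x then Q q y else 0)
          = (∑ x ∈ univ.filter (fun x => Ext y x), c x) * Q q y := by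
        rw [Finset.sum_filter, Finset.sum_mul]
        apply Finset.sum_congr rfl
        intro x _
        by_cases h : Ext y x <;> simp [h]
      rw [h1, hsum_c, div_mul_cancel₀ _ (hQpos y).ne']
    rw [Finset.sum_congr rfl fun y hy => hinner y (by
      simpa only [mem_filter, mem_univ, true_and] using hy)]
    exact inversion pr w
  rw [hrepr]
  exact (convex_convexHull ℝ _).sum_mem (fun x _ => hc0 x) hc1
    (fun x _ => subset_convexHull ℝ _ (Set.mem_range_self x))
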